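/- arXiv:2101.10606 — 10 statements merged into one kernel-verified Lean document; each statement's English description precedes it below -/
import Mathlib

section
/- For λ ∈ ℂ*, a, b ∈ ℂ, the actions L_α · f(t) = λ^α(t - αa) f(t - α) and I_α · f(t) = b λ^α f(t - α), with central elements acting by zero, define a representation of the Heisenberg-Virasoro algebra on ℂ[t]: in particular (L_α I_β - I_β L_α) f(t) = β · b λ^{α+β} f(t - α - β) and (I_α I_β - I_β I_α) f(t) = 0 for all α, β ∈ ℤ. -/
open Polynomial

/-- `L_α · f(t) = λ^α (t - αa) f(t - α)` on `Ω(λ, a, b) = ℂ[t]`. -/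
noncomputable def hvL (lam a : ℂ) (α : ℤ) (f : Polynomial ℂ) : Polynomial ℂ :=
  lam ^ α • ((X - C ((α : ℂ) * a)) * f.comp (X - C (α : ℂ)))

/-- `I_α · f(t) = b λ^α f(t - α)` on `Ω(λ, a, b) = ℂ[t]`. -/
noncomputable def hvI (lam b : ℂ) (α : ℤ) (f : Polynomial ℂ) : Polynomial ℂ :=
  (b * lam ^ α) • f.comp (X - C (α : ℂ))

/-- The actions `L_α f(t) = λ^α(t-αa)f(t-α)`, `I_α f(t) = bλ^α f(t-α)`, with central
elements acting by zero, define a representation of the Heisenberg-Virasoro algebra on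
`ℂ[t]`: in particular `(L_α I_β - I_β L_α) f = β · b λ^{α+β} f(t-α-β)` and
`(I_α I_β - I_β I_α) f = 0`. -/
theorem heisenbergVirasoro_module_Omega (lam a b : ℂ) (hlam : lam ≠ 0)
    (α β : ℤ) (f : Polynomial ℂ) :
    (hvL lam a α (hvI lam b β f) - hvI lam b β (hvL lam a α f) =
      (β : ℂ) • ((b * lam ^ (α + β)) • f.comp (X - C ((α : ℂ) + (β : ℂ))))) ∧
    (hvI lam b α (hvI lam b β f) - hvI lam b β (hvI lam b α f) = 0) := by
  constructor <;>
  · apply Polynomial.funext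
    intro x
    simp only [hvL, hvI, eval_smul, eval_mul, eval_sub, eval_comp, eval_X, eval_C,
      eval_zero, smul_eq_mul, zpow_add₀ hlam]
    ring_nf
end

section
/- The Witt-algebra module Ω(λ, a) = ℂ[t] with action L_α f(t) = λ^α(t - αa)f(t - α) is simple if and only if a ≠ 0. Moreover if a = 0, then (t)ℂ[t] (polynomials with zero constant term, identified via the submodule spanned by images of t) forms a proper nonzero submodule. -/
/-! For `a ≠ 0` and `0 ≠ f ∈ N`, the vector `λ^{-α} L_α f = (t - αa) f(t - α)` depends
polynomially on `α`, with leading coefficient the nonzero constant `-a (-1)^(deg f) lc(f)`.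
The top forward difference in `α` of this polynomial is an integer combination of the
`L_k f ∈ N` and equals that constant times a factorial, so `1 ∈ N`; as `L_0` is multiplication
by `t`, `N = ℂ[t]`. For `a = 0` every `L_α f` is divisible by `t`. -/

open Polynomial

/-- The action of the Witt basis element `L_α` on `Ω(λ, a) = ℂ[t]`:
`L_α · f(t) = λ^α (t - αa) f(t - α)`. -/
noncomputable def wittL (lam a : ℂ) (α : ℤ) (f : Polynomial ℂ) : Polynomial ℂ :=
  lam ^ α • ((X - C ((α : ℂ) * a)) * f.comp (X - C (α : ℂ)))

theorem fwdDiff_iter_mem_of_forall_shift_mem {M G : Type*} [AddCommMonoid M] [AddCommGroup G]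
    (S : AddSubgroup G) {f : M → G} {h y : M} (hf : ∀ k : ℕ, f (y + k • h) ∈ S) (n : ℕ) :
    (fwdDiff h)^[n] f y ∈ S := by
  rw [fwdDiff_iter_eq_sum_shift]
  exact sum_mem fun k _ => AddSubgroup.zsmul_mem S (hf k) _

theorem Polynomial.leadingCoeff_mul_factorial_mem_of_eval_natCast_mem {R : Type*} [CommRing R]
    (S : AddSubgroup R) (P : R[X]) (hP : ∀ k : ℕ, P.eval (k : R) ∈ S) :
    P.leadingCoeff * P.natDegree.factorial ∈ S := by
  have := fwdDiff_iter_mem_of_forall_shift_mem S (f := P.eval) (h := 1) (y := 0)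
    (by simpa using hP) P.natDegree
  simpa [P.fwdDiff_iter_degree_eq_factorial] using this

/-- `λ^{-α} L_α f`, as a polynomial in the outer variable `α` over `ℂ[t]`. -/
noncomputable def wittPoly (a : ℂ) (f : ℂ[X]) : ℂ[X][X] :=
  (C X - C (C a) * X) * (f.map C).comp (C X - X)

lemma wittL_eq_smul_eval_wittPoly (lam a : ℂ) (α : ℤ) (f : ℂ[X]) :
    wittL lam a α f = lam ^ α • (wittPoly a f).eval (C (α : ℂ)) := by
  simp only [wittL, wittPoly, eval_mul, eval_comp, eval_map, eval_sub, eval_C, eval_X, C_mul]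
  rw [mul_comm (C a)]
  rfl

lemma leadingCoeff_wittPoly {a : ℂ} (ha : a ≠ 0) (f : ℂ[X]) :
    (wittPoly a f).leadingCoeff = C (-a * (-1) ^ f.natDegree * f.leadingCoeff) := by
  have hlin : (C X - X : ℂ[X][X]) = C (-1) * X + C X := by rw [C_neg, C_1]; ring
  have hlin' : (C X - C (C a) * X : ℂ[X][X]) = C (-C a) * X + C X := by rw [C_neg]; ring
  have hneg : (-1 : ℂ[X]) ≠ 0 := neg_ne_zero.2 one_ne_zero
  rw [wittPoly, leadingCoeff_mul, leadingCoeff_comp (by rw [hlin, natDegree_linear hneg]; simp),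
    hlin, hlin', leadingCoeff_linear hneg, leadingCoeff_linear (by simpa using ha),
    leadingCoeff_map_of_injective C_injective, natDegree_map_eq_of_injective C_injective]
  simp only [C_mul, C_neg, C_pow, C_1]
  ring

lemma wittL_zero_left (lam a : ℂ) (f : ℂ[X]) : wittL lam a 0 f = X * f := by
  simp [wittL]

lemma wittL_zero_right (lam : ℂ) (α : ℤ) (f : ℂ[X]) :
    wittL lam 0 α f = lam ^ α • (X * f.comp (X - C (α : ℂ))) := by
  simp [wittL]

def IsWittInvariant (lam a : ℂ) (N : Submodule ℂ ℂ[X]) : Prop :=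
  ∀ (α : ℤ) (f : ℂ[X]), f ∈ N → wittL lam a α f ∈ N

namespace IsWittInvariant

variable {lam a : ℂ} {N : Submodule ℂ ℂ[X]}

lemma eval_wittPoly_natCast_mem (hN : IsWittInvariant lam a N) (hlam : lam ≠ 0) {f : ℂ[X]}
    (hf : f ∈ N) (k : ℕ) : (wittPoly a f).eval (k : ℂ[X]) ∈ N := by
  have h := N.smul_mem (lam ^ (k : ℤ))⁻¹ (hN k f hf)
  rw [← map_natCast C k]
  rwa [wittL_eq_smul_eval_wittPoly, inv_smul_smul₀ (zpow_ne_zero _ hlam), Int.cast_natCast] at h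

lemma one_mem (hN : IsWittInvariant lam a N) (hlam : lam ≠ 0) (ha : a ≠ 0) (hbot : N ≠ ⊥) :
    (1 : ℂ[X]) ∈ N := by
  obtain ⟨f, hfN, hf⟩ := N.ne_bot_iff.1 hbot
  have h := (wittPoly a f).leadingCoeff_mul_factorial_mem_of_eval_natCast_mem
    N.toAddSubgroup (hN.eval_wittPoly_natCast_mem hlam hfN)
  set c := -a * (-1) ^ f.natDegree * f.leadingCoeff * (wittPoly a f).natDegree.factorial
  have hc : c ≠ 0 := by simp [c, ha, hf, Nat.factorial_ne_zero]
  have hCc : C c ∈ N := by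
    rwa [leadingCoeff_wittPoly ha, ← map_natCast C, ← C_mul] at h
  simpa [← smul_eq_C_mul, smul_smul, hc] using N.smul_mem c⁻¹ hCc

lemma eq_top_of_one_mem (hN : IsWittInvariant lam a N) (h1 : (1 : ℂ[X]) ∈ N) : N = ⊤ := by
  refine N.eq_top_iff'.2 fun p => p.induction_on (fun c => ?_) (fun _ _ => N.add_mem) ?_
  · simpa [smul_eq_C_mul] using N.smul_mem c h1
  · intro n c h
    convert hN 0 _ h using 1
    rw [wittL_zero_left]
    ring

lemma eq_bot_or_eq_top (hN : IsWittInvariant lam a N) (hlam : lam ≠ 0) (ha : a ≠ 0) :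
    N = ⊥ ∨ N = ⊤ :=
  or_iff_not_imp_left.2 fun hbot => hN.eq_top_of_one_mem (hN.one_mem hlam ha hbot)

end IsWittInvariant

lemma isWittInvariant_ker_lcoeff_zero (lam : ℂ) :
    IsWittInvariant lam 0 (LinearMap.ker (lcoeff ℂ 0)) := by
  intro α f _
  simp [wittL_zero_right]

lemma ker_lcoeff_zero_ne_bot : LinearMap.ker (lcoeff ℂ (0 : ℕ)) ≠ ⊥ :=
  (Submodule.ne_bot_iff _).2 ⟨X, by simp, X_ne_zero⟩

lemma ker_lcoeff_zero_ne_top : LinearMap.ker (lcoeff ℂ (0 : ℕ)) ≠ ⊤ :=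
  fun h => by
    have h1 : (1 : ℂ[X]) ∈ LinearMap.ker (lcoeff ℂ 0) := h ▸ Submodule.mem_top
    simp at h1

/-- The Witt module `Ω(λ, a)` is simple iff `a ≠ 0`; moreover, if `a = 0` then the
polynomials with zero constant term form a proper nonzero submodule. -/
theorem Omega_simple_iff (lam a : ℂ) (hlam : lam ≠ 0) :
    ((∀ N : Submodule ℂ (Polynomial ℂ),
        (∀ (α : ℤ) (f : Polynomial ℂ), f ∈ N → wittL lam a α f ∈ N) → N = ⊥ ∨ N = ⊤) ↔
      a ≠ 0) ∧
    (a = 0 →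
      LinearMap.ker (lcoeff ℂ 0) ≠ ⊥ ∧ LinearMap.ker (lcoeff ℂ 0) ≠ ⊤ ∧
      ∀ (α : ℤ) (f : Polynomial ℂ), f ∈ LinearMap.ker (lcoeff ℂ 0) →
        wittL lam a α f ∈ LinearMap.ker (lcoeff ℂ 0)) := by
  have hinv (h0 : a = 0) := h0 ▸ isWittInvariant_ker_lcoeff_zero lam
  refine ⟨⟨fun hsimple ha => ?_, fun ha N hN => IsWittInvariant.eq_bot_or_eq_top hN hlam ha⟩,
    fun ha => ⟨ker_lcoeff_zero_ne_bot, ker_lcoeff_zero_ne_top, hinv ha⟩⟩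
  rcases hsimple _ (hinv ha) with h | h
  exacts [ker_lcoeff_zero_ne_bot h, ker_lcoeff_zero_ne_top h]
end

section
/- In the Ramond-Block module Ω_R(λ, a, b), the actions of L_{m,i} and L_{n,j} on the even part ℂ[t²] satisfy the commutation relation: L_{m,i}L_{n,j}f(t²) - L_{n,j}L_{m,i}f(t²) = (n(i+q) - m(j+q)) λ^{m+n}(δ_{i+j,0}(t² - (m+n)qa) + δ_{q,-1}δ_{i+j,1}b) f(t² - (m+n)q). -/
open Polynomial

/-!
`L_{m,i}` is multiplication by a weight `w_{m,i}` of degree at most one after the shift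
`t² ↦ t² - mq`. Hence `L_{m,i}L_{n,j}` is multiplication by `w_{m,i}(t²) w_{n,j}(t² - mq)` after
the shift by `(m+n)q`, and the commutator relation reduces to an identity between these
products of weights, checked case by case on `i, j ∈ {0, 1, ≥ 2}`: the `t⁴` terms cancel, and
for `(i, j) = (0, 1)` the `δ_{q,-1}` factor makes `m(j+q)` vanish.
-/

/-- Action (3.1) of `L_{m,i}` on the even part `ℂ[t²]` of `Ω_R(λ,a,b)`; a polynomial
`f` in the variable `X` stands for `f(t²)`. -/
noncomputable def LeR (q lam a b : ℂ) (m : ℤ) (i : ℕ) (f : Polynomial ℂ) : Polynomial ℂ :=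
  lam ^ m • (((if i = 0 then X - C ((m : ℂ) * q * a) else 0) +
      (if q = -1 ∧ i = 1 then C b else 0)) * f.comp (X - C ((m : ℂ) * q)))

/-- Action (3.2) of `L_{m,i}` on the odd part `tℂ[t²]` of `Ω_R(λ,a,b)`; a polynomial
`f` in the variable `X` stands for `t·f(t²)`. -/
noncomputable def LoR (q lam a b : ℂ) (m : ℤ) (i : ℕ) (f : Polynomial ℂ) : Polynomial ℂ :=
  lam ^ m • (((if i = 0 then X - C ((m : ℂ) * q * a + (m : ℂ) * q / 2) else 0) +
      (if q = -1 ∧ i = 1 then C b else 0)) * f.comp (X - C ((m : ℂ) * q)))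

/-- Action (3.3) of `G_{m,i}` sending the even part to the odd part of `Ω_R(λ,a,b)`:
`G_{m,i} f(t²) = λ^m δ_{i,0} t f(t² - mq)`. -/
noncomputable def GeoR (q lam : ℂ) (m : ℤ) (i : ℕ) (f : Polynomial ℂ) : Polynomial ℂ :=
  lam ^ m • (if i = 0 then f.comp (X - C ((m : ℂ) * q)) else 0)

/-- Action (3.4) of `G_{m,i}` sending the odd part to the even part of `Ω_R(λ,a,b)`:
`G_{m,i} (t f(t²)) = qλ^m(δ_{i,0}(t² - 2mqa) + 2δ_{q,-1}δ_{i,1}b) f(t² - mq)`. -/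
noncomputable def GoeR (q lam a b : ℂ) (m : ℤ) (i : ℕ) (f : Polynomial ℂ) : Polynomial ℂ :=
  (q * lam ^ m) • (((if i = 0 then X - C (2 * (m : ℂ) * q * a) else 0) +
      (if q = -1 ∧ i = 1 then C (2 * b) else 0)) * f.comp (X - C ((m : ℂ) * q)))

namespace Polynomial

theorem comp_X_sub_C_comp_X_sub_C {R : Type*} [CommRing R] (f : R[X]) (c d : R) :
    (f.comp (X - C c)).comp (X - C d) = f.comp (X - C (d + c)) := by
  rw [comp_assoc, sub_comp, X_comp, C_comp, sub_sub, ← C_add]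

end Polynomial

noncomputable def evenWeight (q a b μ : ℂ) (i : ℕ) : Polynomial ℂ :=
  (if i = 0 then X - C (μ * q * a) else 0) + (if q = -1 ∧ i = 1 then C b else 0)

section
variable {q lam a b : ℂ}

theorem LeR_eq (m : ℤ) (i : ℕ) (f : Polynomial ℂ) :
    LeR q lam a b m i f = lam ^ m • (evenWeight q a b m i * f.comp (X - C ((m : ℂ) * q))) :=
  rfl

theorem LeR_LeR (hlam : lam ≠ 0) (m n : ℤ) (i j : ℕ) (f : Polynomial ℂ) :
    LeR q lam a b m i (LeR q lam a b n j f) =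
      lam ^ (m + n) • (evenWeight q a b m i * (evenWeight q a b n j).comp (X - C ((m : ℂ) * q)) *
        f.comp (X - C (((m : ℂ) + n) * q))) := by
  simp only [LeR_eq, smul_comp, mul_comp, comp_X_sub_C_comp_X_sub_C, mul_smul_comm, smul_smul,
    zpow_add₀ hlam, add_mul, mul_assoc]

end

theorem evenWeight_commutator (q a b μ ν : ℂ) (i j : ℕ) :
    evenWeight q a b μ i * (evenWeight q a b ν j).comp (X - C (μ * q)) -
        evenWeight q a b ν j * (evenWeight q a b μ i).comp (X - C (ν * q)) =
      C (ν * (i + q) - μ * (j + q)) * evenWeight q a b (μ + ν) (i + j) := by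
  rcases i with _ | _ | i <;> rcases j with _ | _ | j <;> by_cases hq : q = -1 <;>
    simp [evenWeight, hq, Nat.add_eq_one_iff] <;> ring

theorem OmegaR_even_LL_commutator_general (q lam a b : ℂ) (hlam : lam ≠ 0)
    (m n : ℤ) (i j : ℕ) (f : Polynomial ℂ) :
    LeR q lam a b m i (LeR q lam a b n j f) - LeR q lam a b n j (LeR q lam a b m i f) =
      ((n : ℂ) * ((i : ℂ) + q) - (m : ℂ) * ((j : ℂ) + q)) •
        (lam ^ (m + n) • (((if i + j = 0 then X - C (((m : ℂ) + (n : ℂ)) * q * a) else 0) +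
            (if q = -1 ∧ i + j = 1 then C b else 0)) *
          f.comp (X - C (((m : ℂ) + (n : ℂ)) * q)))) := by
  rw [LeR_LeR hlam, LeR_LeR hlam, add_comm n m, add_comm (n : ℂ), ← smul_sub, ← sub_mul,
    evenWeight_commutator, smul_eq_C_mul, smul_eq_C_mul, smul_eq_C_mul]
  unfold evenWeight
  ring

/-- In `Ω_R(λ,a,b)` the operators `L_{m,i}`, `L_{n,j}` on the even part `ℂ[t²]` satisfy
`L_{m,i}L_{n,j}f - L_{n,j}L_{m,i}f
  = (n(i+q) - m(j+q)) λ^{m+n}(δ_{i+j,0}(t² - (m+n)qa) + δ_{q,-1}δ_{i+j,1}b) f(t² - (m+n)q)`. -/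
theorem OmegaR_even_LL_commutator (q lam a b : ℂ) (hq : q ≠ 0) (hlam : lam ≠ 0)
    (m n : ℤ) (i j : ℕ) (f : Polynomial ℂ) :
    LeR q lam a b m i (LeR q lam a b n j f) - LeR q lam a b n j (LeR q lam a b m i f) =
      ((n : ℂ) * ((i : ℂ) + q) - (m : ℂ) * ((j : ℂ) + q)) •
        (lam ^ (m + n) • (((if i + j = 0 then X - C (((m : ℂ) + (n : ℂ)) * q * a) else 0) +
            (if q = -1 ∧ i + j = 1 then C b else 0)) *
          f.comp (X - C (((m : ℂ) + (n : ℂ)) * q)))) :=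
  OmegaR_even_LL_commutator_general q lam a b hlam m n i j f
end

section
/- In the Ramond-Block module Ω_R(λ, a, b), the anticommutator of odd operators on the even part satisfies: G_{m,i}G_{n,j}f(t²) + G_{n,j}G_{m,i}f(t²) = 2q λ^{m+n}(δ_{i+j,0}(t² - (m+n)qa) + δ_{q,-1}δ_{i+j,1}b) f(t² - (m+n)q), i.e., equals 2q L_{m+n,i+j} f(t²). -/
open Polynomial

/-- In `Ω_R(λ,a,b)` the anticommutator of the odd operators on the even part satisfies
`G_{m,i}G_{n,j}f + G_{n,j}G_{m,i}f
  = 2qλ^{m+n}(δ_{i+j,0}(t² - (m+n)qa) + δ_{q,-1}δ_{i+j,1}b) f(t² - (m+n)q)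
  = 2q L_{m+n,i+j} f`. -/
theorem OmegaR_even_GG_anticommutator (q lam a b : ℂ) (hq : q ≠ 0) (hlam : lam ≠ 0)
    (m n : ℤ) (i j : ℕ) (f : Polynomial ℂ) :
    GoeR q lam a b m i (GeoR q lam n j f) + GoeR q lam a b n j (GeoR q lam m i f) =
      (2 * q * lam ^ (m + n)) •
        (((if i + j = 0 then X - C (((m : ℂ) + (n : ℂ)) * q * a) else 0) +
          (if q = -1 ∧ i + j = 1 then C b else 0)) *
         f.comp (X - C (((m : ℂ) + (n : ℂ)) * q))) ∧
    GoeR q lam a b m i (GeoR q lam n j f) + GoeR q lam a b n j (GeoR q lam m i f) =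
      (2 * q) • LeR q lam a b (m + n) (i + j) f := by
  have hcomp : ∀ (c d : ℂ) (g : Polynomial ℂ),
      (g.comp (X - C c)).comp (X - C d) = g.comp (X - C (c + d)) := by
    intro c d g
    rw [Polynomial.comp_assoc]
    congr 1
    simp only [sub_comp, X_comp, C_comp, map_add]
    ring
  have hz : lam ^ (m + n) = lam ^ m * lam ^ n := zpow_add₀ hlam m n
  have key : GoeR q lam a b m i (GeoR q lam n j f) + GoeR q lam a b n j (GeoR q lam m i f) =
      (2 * q * lam ^ (m + n)) •
        (((if i + j = 0 then X - C (((m : ℂ) + (n : ℂ)) * q * a) else 0) +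
          (if q = -1 ∧ i + j = 1 then C b else 0)) *
         f.comp (X - C (((m : ℂ) + (n : ℂ)) * q))) := by
    have e1 : (n : ℂ) * q + (m : ℂ) * q = ((m : ℂ) + (n : ℂ)) * q := by ring
    have e2 : (m : ℂ) * q + (n : ℂ) * q = ((m : ℂ) + (n : ℂ)) * q := by ring
    unfold GoeR GeoR
    rcases eq_or_ne i 0 with hi | hi <;> rcases eq_or_ne j 0 with hj | hj
    · simp only [hi, hj, Nat.add_zero, reduceIte, zero_ne_one, and_false, zero_comp, smul_comp, hcomp, e1, e2]
      by_cases hq1 : q = -1 <;>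
        simp only [hq1, true_and, false_and, if_false, reduceIte, zero_ne_one, and_false, zero_comp, zero_ne_one, and_false, zero_comp, add_zero] <;>
      · simp only [smul_eq_C_mul, hz, map_mul, map_add, map_neg, map_one, map_ofNat,
          add_zero, zero_add]
        ring
    · have hij : i + j = j := by omega
      simp only [hi, hj, hij, reduceIte, zero_ne_one, and_false, zero_comp, if_neg hj, smul_zero, comp_zero, mul_zero,
        smul_comp, hcomp, e2, zero_add, add_zero, zero_mul, mul_zero]
      by_cases hj1 : j = 1
      · by_cases hq1 : q = -1 <;>
          simp only [hq1, hj1, true_and, false_and, if_false, reduceIte, zero_ne_one, and_false, zero_comp, zero_ne_one, and_false, zero_comp, zero_add,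
            smul_zero, mul_zero, zero_mul, add_zero] <;>
        · simp only [smul_eq_C_mul, hz, map_mul, map_add, map_neg, map_one, map_ofNat,
            add_zero, zero_add]
          ring
      · simp only [if_neg (fun h : q = -1 ∧ j = 1 => hj1 h.2), zero_add, add_zero,
          smul_zero, mul_zero, zero_mul]
    · have hij : i + j = i := by omega
      simp only [hi, hj, hij, reduceIte, zero_ne_one, and_false, zero_comp, if_neg hi, smul_zero, comp_zero, mul_zero,
        smul_comp, hcomp, e1, zero_add, add_zero, zero_mul, mul_zero]
      by_cases hi1 : i = 1
      · by_cases hq1 : q = -1 <;>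
          simp only [hq1, hi1, true_and, false_and, if_false, reduceIte, zero_ne_one, and_false, zero_comp, zero_ne_one, and_false, zero_comp, zero_add,
            smul_zero, mul_zero, zero_mul, add_zero] <;>
        · simp only [smul_eq_C_mul, hz, map_mul, map_add, map_neg, map_one, map_ofNat,
            add_zero, zero_add]
          ring
      · simp only [if_neg (fun h : q = -1 ∧ i = 1 => hi1 h.2), zero_add, add_zero,
          smul_zero, mul_zero, zero_mul]
    · have h0 : i + j ≠ 0 := by omega
      have h1 : i + j ≠ 1 := by omega
      simp only [if_neg hi, if_neg hj, if_neg h0,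
        if_neg (fun h : q = -1 ∧ i + j = 1 => h1 h.2), smul_zero, comp_zero, zero_comp,
        mul_zero, zero_mul, zero_add, add_zero, smul_zero]
  refine ⟨key, ?_⟩
  rw [key, LeR, smul_smul]
  simp only [Int.cast_add, mul_assoc]
end

section
/- In the Ramond-Block module Ω_R(λ, a, b), the anticommutator of odd operators on the odd part satisfies: G_{m,i}G_{n,j}(t f(t²)) + G_{n,j}G_{m,i}(t f(t²)) = 2q λ^{m+n} t (δ_{i+j,0}(t² - (m+n)(a + 1/2)q) + δ_{q,-1}δ_{i+j,1}b) f(t² - (m+n)q), which equals 2q L_{m+n,i+j}(t f(t²)). -/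
open Polynomial

private lemma comp_comp' (f : Polynomial ℂ) (u v : ℂ) :
    (f.comp (X - C u)).comp (X - C v) = f.comp (X - C (u + v)) := by
  rw [comp_assoc]; congr 1; simp [sub_sub, map_add, add_comm]

private lemma GG_key (q lam a b : ℂ) (hlam : lam ≠ 0)
    (m n : ℤ) (i j : ℕ) (f : Polynomial ℂ) :
    GeoR q lam m i (GoeR q lam a b n j f) + GeoR q lam n j (GoeR q lam a b m i f) =
      (2 * q * lam ^ (m + n)) •
        (((if i + j = 0 then X - C (((m : ℂ) + (n : ℂ)) * (a + 1 / 2) * q) else 0) +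
          (if q = -1 ∧ i + j = 1 then C b else 0)) *
         f.comp (X - C (((m : ℂ) + (n : ℂ)) * q))) := by
  unfold GeoR GoeR
  apply Polynomial.funext
  intro x
  rcases i with _ | _ | i <;> rcases j with _ | _ | j <;>
    rcases eq_or_ne q (-1) with hq1 | hq1 <;>
    simp [hq1, comp_comp', eval_comp, zpow_add₀ hlam] <;>
    try ring_nf
  all_goals (rw [if_neg (by omega)]; simp)

/-- In `Ω_R(λ,a,b)` the anticommutator of the odd operators on the odd part satisfies
`G_{m,i}G_{n,j}(tf) + G_{n,j}G_{m,i}(tf)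
  = 2qλ^{m+n} t(δ_{i+j,0}(t² - (m+n)(a+1/2)q) + δ_{q,-1}δ_{i+j,1}b) f(t² - (m+n)q)
  = 2q L_{m+n,i+j}(tf)`. -/
theorem OmegaR_odd_GG_anticommutator (q lam a b : ℂ) (hq : q ≠ 0) (hlam : lam ≠ 0)
    (m n : ℤ) (i j : ℕ) (f : Polynomial ℂ) :
    GeoR q lam m i (GoeR q lam a b n j f) + GeoR q lam n j (GoeR q lam a b m i f) =
      (2 * q * lam ^ (m + n)) •
        (((if i + j = 0 then X - C (((m : ℂ) + (n : ℂ)) * (a + 1 / 2) * q) else 0) +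
          (if q = -1 ∧ i + j = 1 then C b else 0)) *
         f.comp (X - C (((m : ℂ) + (n : ℂ)) * q))) ∧
    GeoR q lam m i (GoeR q lam a b n j f) + GeoR q lam n j (GoeR q lam a b m i f) =
      (2 * q) • LoR q lam a b (m + n) (i + j) f := by
  refine ⟨GG_key q lam a b hlam m n i j f, ?_⟩
  rw [GG_key q lam a b hlam m n i j f]
  unfold LoR
  apply Polynomial.funext
  intro x
  push_cast
  split_ifs <;> simp [eval_comp, zpow_add₀ hlam] <;> ring_nf
end

section
/- Let λ ∈ ℂ*, m ∈ ℤ, q ∈ ℂ*, a, b ∈ ℂ, and suppose H_m ∈ ℂ[t] (viewed as polynomial in t²) satisfies H_{m,i}(t² - mq)(2λ^m(δ_{i,0}(t² - mqa) + δ_{q,-1}δ_{i,1}b) - t² H_{m,i}(t²)) = λ^{2m} δ_{2i,0}(t² - 2mqa) as a polynomial identity. Then H_{m,0}(t²) = λ^m (the constant polynomial), and H_{m,i}(t²) = 0 for all i ≥ 1. -/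
open Polynomial

/-- If `H = H_{m,i} ∈ ℂ[u]` (with `u = t²`) satisfies the polynomial identity
`H(u - mq)(2λ^m(δ_{i,0}(u - mqa) + δ_{q,-1}δ_{i,1}b) - u H(u)) = λ^{2m} δ_{2i,0}(u - 2mqa)`,
then `H_{m,0} = λ^m` (the constant polynomial) and `H_{m,i} = 0` for `i ≥ 1`. -/
theorem H_determined (q lam a b : ℂ) (hq : q ≠ 0) (hlam : lam ≠ 0)
    (m : ℤ) (i : ℕ) (H : Polynomial ℂ)
    (hid : H.comp (X - C ((m : ℂ) * q)) *
        ((2 * lam ^ m) • ((if i = 0 then X - C ((m : ℂ) * q * a) else 0) +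
            (if q = -1 ∧ i = 1 then C b else 0)) - X * H) =
      lam ^ (2 * m) • (if i = 0 then X - C (2 * (m : ℂ) * q * a) else 0)) :
    (i = 0 → H = C (lam ^ m)) ∧ (1 ≤ i → H = 0) := by
  constructor
  · intro hi0
    subst hi0
    simp only [if_pos rfl, if_true, if_neg (by simp : ¬(q = -1 ∧ (0:ℕ) = 1)), add_zero] at hid
    have hl2 : lam ^ (2*m) ≠ 0 := zpow_ne_zero _ hlam
    have hrhs : lam ^ (2*m) • (X - C (2*(m:ℂ)*q*a)) ≠ 0 := by
      intro h
      rcases smul_eq_zero.mp h with h' | h'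
      · exact hl2 h'
      · exact X_sub_C_ne_zero _ h'
    have hne : H.comp (X - C ((m:ℂ)*q)) *
        ((2 * lam ^ m) • (X - C ((m:ℂ)*q*a)) - X * H) ≠ 0 := hid ▸ hrhs
    have h1 : H.comp (X - C ((m:ℂ)*q)) ≠ 0 := left_ne_zero_of_mul hne
    have h2 : (2 * lam ^ m) • (X - C ((m:ℂ)*q*a)) - X * H ≠ 0 := right_ne_zero_of_mul hne
    have hH : H ≠ 0 := by
      intro h; apply h1; simp [h]
    -- degree considerations: natDegree H = 0
    have hd0 : H.natDegree = 0 := by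
      by_contra hd
      have hd1 : 1 ≤ H.natDegree := Nat.one_le_iff_ne_zero.mpr hd
      have hcomp : (H.comp (X - C ((m:ℂ)*q))).natDegree = H.natDegree := by
        rw [natDegree_comp, natDegree_X_sub_C, mul_one]
      have hXH : (X * H).natDegree = 1 + H.natDegree :=
        by rw [natDegree_mul X_ne_zero hH, natDegree_X]
      have hsm : ((2 * lam ^ m) • (X - C ((m:ℂ)*q*a))).natDegree < (X * H).natDegree := by
        calc ((2 * lam ^ m) • (X - C ((m:ℂ)*q*a))).natDegree
            ≤ (X - C ((m:ℂ)*q*a)).natDegree := natDegree_smul_le _ _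
          _ = 1 := natDegree_X_sub_C _
          _ < (X * H).natDegree := by omega
      have hf2 : ((2 * lam ^ m) • (X - C ((m:ℂ)*q*a)) - X * H).natDegree = 1 + H.natDegree :=
        by rw [natDegree_sub_eq_right_of_natDegree_lt hsm, hXH]
      have hRd : (lam ^ (2*m) • (X - C (2*(m:ℂ)*q*a))).natDegree = 1 := by
        rw [smul_eq_C_mul, natDegree_C_mul hl2, natDegree_X_sub_C]
      have := natDegree_mul h1 h2
      rw [hid, hRd, hcomp, hf2] at this
      omega
    obtain ⟨c, rfl⟩ : ∃ c, H = C c := ⟨H.coeff 0, eq_C_of_natDegree_eq_zero hd0⟩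
    have hc1 := congrArg (fun p => Polynomial.coeff p 1) hid
    simp only [C_comp, coeff_C_mul, coeff_smul, coeff_sub, coeff_X_one, coeff_X_mul,
      coeff_C, coeff_C_zero, smul_eq_mul] at hc1
    -- extract : c * (2*lam^m - c) = lam^(2*m)
    have hc : c * (2 * lam ^ m - c) = lam ^ (2*m) := by
      simpa using hc1
    have hpow : lam ^ (2*m) = (lam ^ m) ^ 2 := by
      rw [two_mul, zpow_add₀ hlam, sq]
    have : (c - lam ^ m) ^ 2 = 0 := by
      rw [hpow] at hc; linear_combination -hc
    have hce : c = lam ^ m :=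
      sub_eq_zero.mp (pow_eq_zero_iff (n := 2) (by norm_num) |>.mp this)
    exact congrArg C hce
  · intro hi1
    have hi0 : i ≠ 0 := by omega
    simp only [if_neg hi0, smul_zero, zero_add] at hid
    rcases mul_eq_zero.mp hid with h | h
    · -- comp = 0 → H = 0
      rcases comp_eq_zero_iff.mp h with h' | ⟨-, h'⟩
      · exact h'
      · exfalso
        have h2 := congrArg natDegree h'
        rw [natDegree_X_sub_C, natDegree_C] at h2
        exact one_ne_zero h2
    · -- second factor zero
      by_contra hH
      have hXH : (X * H).natDegree = 1 + H.natDegree :=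
        by rw [natDegree_mul X_ne_zero hH, natDegree_X]
      have hg : ((2 * lam ^ m) • (if q = -1 ∧ i = 1 then C b else 0)).natDegree = 0 := by
        apply Nat.le_zero.mp
        refine (natDegree_smul_le _ _).trans ?_
        split <;> simp
      have hXHg : X * H = (2 * lam ^ m) • (if q = -1 ∧ i = 1 then C b else 0) :=
        by linear_combination (norm := ring_nf) -h
      have : (X * H).natDegree = 0 := by rw [hXHg, hg]
      omega
end

section
/- The linear map φ: Ω_L(λ, a, b) → Ω_R(λ^{1/2}, a, 2b) defined by f(t) ↦ f(t²/2) and g(x) ↦ (λ^{1/2}/√2)·t·g(t²/2) is bijective and intertwines the module actions via τ: φ(L_{m,i}·v) = τ(L_{m,i})·φ(v) and φ(G_{r,j}·v) = τ(G_{r,j})·φ(v) for all m ∈ ℤ, r ∈ 1/2 + ℤ, i, j ∈ ℤ₊ and all v ∈ Ω_L(λ, a, b). Hence Ω_L(λ, a, b) ≅ Ω_R(λ^{1/2}, a, 2b) as L-modules. -/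
open Polynomial

open Polynomial

/-- Action (4.1) of `L_{m,i}` on the even part `ℂ[t]` of `Ω_L(λ,a,b)`. -/
noncomputable def LeL (q lam a b : ℂ) (m : ℤ) (i : ℕ) (f : Polynomial ℂ) : Polynomial ℂ :=
  lam ^ m • (((if i = 0 then X - C ((m : ℂ) * q * a) else 0) +
      (if q = -1 ∧ i = 1 then C b else 0)) * f.comp (X - C ((m : ℂ) * q)))

/-- Action (4.2) of `L_{m,i}` on the odd part `ℂ[x]` of `Ω_L(λ,a,b)`. -/
noncomputable def LoL (q lam a b : ℂ) (m : ℤ) (i : ℕ) (g : Polynomial ℂ) : Polynomial ℂ :=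
  lam ^ m • (((if i = 0 then X - C ((m : ℂ) * q * a + (m : ℂ) * q / 2) else 0) +
      (if q = -1 ∧ i = 1 then C b else 0)) * g.comp (X - C ((m : ℂ) * q)))

/-- Action (4.3) of `G_{r,i}` (with `r = k + 1/2`, encoded by `k ∈ ℤ`) sending the even
part `ℂ[t]` to the odd part `ℂ[x]`: `G_{r,i} f(t) = λ^{r-1/2} δ_{i,0} f(x - rq)`. -/
noncomputable def GeoL (q lam : ℂ) (k : ℤ) (i : ℕ) (f : Polynomial ℂ) : Polynomial ℂ :=
  lam ^ k • (if i = 0 then f.comp (X - C (((k : ℂ) + 1 / 2) * q)) else 0)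

/-- Action (4.4) of `G_{r,i}` (with `r = k + 1/2`, encoded by `k ∈ ℤ`) sending the odd
part `ℂ[x]` to the even part `ℂ[t]`:
`G_{r,i} g(x) = qλ^{r+1/2}(δ_{i,0}(t - 2rqa) + 2δ_{q,-1}δ_{i,1}b) g(t - rq)`. -/
noncomputable def GoeL (q lam a b : ℂ) (k : ℤ) (i : ℕ) (g : Polynomial ℂ) : Polynomial ℂ :=
  (q * lam ^ (k + 1)) •
    (((if i = 0 then X - C (2 * ((k : ℂ) + 1 / 2) * q * a) else 0) +
      (if q = -1 ∧ i = 1 then C (2 * b) else 0)) * g.comp (X - C (((k : ℂ) + 1 / 2) * q)))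

/-- The even component of `φ : Ω_L(λ,a,b) → Ω_R(λ^{1/2},a,2b)`, `f(t) ↦ f(t²/2)`:
in the variable `u = t²` of `Ω_R` this is `f ↦ f(u/2)`. -/
noncomputable def phi0 (f : Polynomial ℂ) : Polynomial ℂ := f.comp (C (2⁻¹ : ℂ) * X)

/-- The odd component of `φ : Ω_L(λ,a,b) → Ω_R(λ^{1/2},a,2b)`,
`g(x) ↦ (λ^{1/2}/√2) t g(t²/2)`: in the `ℂ[u]`-coordinate of the odd part `tℂ[t²]` this
is `g ↦ (μ/√2) g(u/2)` where `μ = λ^{1/2}`. -/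
noncomputable def phi1 (mu : ℂ) (g : Polynomial ℂ) : Polynomial ℂ :=
  (mu / (Real.sqrt 2 : ℂ)) • g.comp (C (2⁻¹ : ℂ) * X)

/-- The linear map `φ : Ω_L(λ, a, b) → Ω_R(λ^{1/2}, a, 2b)`, `f(t) ↦ f(t²/2)`,
`g(x) ↦ (λ^{1/2}/√2) t g(t²/2)`, is bijective and intertwines the module actions via the
embedding `τ` (`τ(L_{m,i}) = (1/2)L_{2m,i}`, `τ(G_{r,j}) = (1/√2)G_{2r,j}`; NSB odd
indices `r = k + 1/2` are encoded by `k ∈ ℤ`). Hence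
`Ω_L(λ, a, b) ≅ Ω_R(λ^{1/2}, a, 2b)` as `L`-modules. -/
theorem OmegaL_iso_OmegaR (q lam mu a b : ℂ) (hq : q ≠ 0) (hlam : lam ≠ 0)
    (hmu : mu ^ 2 = lam) :
    Function.Bijective (fun fg : Polynomial ℂ × Polynomial ℂ =>
      (phi0 fg.1, phi1 mu fg.2)) ∧
    (∀ (m : ℤ) (i : ℕ) (f : Polynomial ℂ),
      phi0 (LeL q lam a b m i f) = (2⁻¹ : ℂ) • LeR q mu a (2 * b) (2 * m) i (phi0 f)) ∧
    (∀ (m : ℤ) (i : ℕ) (g : Polynomial ℂ),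
      phi1 mu (LoL q lam a b m i g) = (2⁻¹ : ℂ) • LoR q mu a (2 * b) (2 * m) i (phi1 mu g)) ∧
    (∀ (k : ℤ) (j : ℕ) (f : Polynomial ℂ),
      phi1 mu (GeoL q lam k j f) =
        ((Real.sqrt 2 : ℂ))⁻¹ • GeoR q mu (2 * k + 1) j (phi0 f)) ∧
    (∀ (k : ℤ) (j : ℕ) (g : Polynomial ℂ),
      phi0 (GoeL q lam a b k j g) =
        ((Real.sqrt 2 : ℂ))⁻¹ • GoeR q mu a (2 * b) (2 * k + 1) j (phi1 mu g)) := by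
  have hmu0 : mu ≠ 0 := by
    intro h
    apply hlam
    rw [← hmu, h]; ring
  subst hmu
  have h2m : ∀ n : ℤ, mu ^ (2*n) = (mu^2)^n := fun n => by rw [zpow_mul]; norm_cast
  have h2m1 : ∀ n : ℤ, mu ^ (2*n+1) = mu * (mu^2)^n := fun n => by
    rw [zpow_add₀ hmu0, zpow_one, zpow_mul, mul_comm]; norm_cast
  have hs2 : ((Real.sqrt 2 : ℝ) : ℂ) * ((Real.sqrt 2 : ℝ) : ℂ) = 2 := by
    rw [← Complex.ofReal_mul, Real.mul_self_sqrt (by norm_num)]; norm_num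
  have hs0 : ((Real.sqrt 2 : ℝ) : ℂ) ≠ 0 := by
    intro h; rw [h, mul_zero] at hs2; exact two_ne_zero hs2.symm
  have hsinv : ((Real.sqrt 2 : ℝ) : ℂ)⁻¹ * ((Real.sqrt 2 : ℝ) : ℂ)⁻¹ = 2⁻¹ := by
    rw [← mul_inv, hs2]
  refine ⟨?_, ?_, ?_, ?_, ?_⟩
  · -- bijectivity
    apply Function.bijective_iff_has_inverse.mpr
    refine ⟨fun fg => (fg.1.comp (C 2 * X),
        (((Real.sqrt 2 : ℝ) : ℂ) / mu) • fg.2.comp (C 2 * X)), ?_, ?_⟩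
    · rintro ⟨f, g⟩
      simp only [phi0, phi1, Prod.mk.injEq]
      constructor
      · rw [comp_assoc, mul_comp, C_comp, X_comp, ← mul_assoc, ← C_mul]; norm_num
      · rw [smul_comp, smul_smul, comp_assoc, mul_comp, C_comp, X_comp, ← mul_assoc,
          ← C_mul]
        norm_num
        rw [div_self hmu0, one_smul]
    · rintro ⟨f, g⟩
      simp only [phi0, phi1, Prod.mk.injEq]
      constructor
      · rw [comp_assoc, mul_comp, C_comp, X_comp, ← mul_assoc, ← C_mul]; norm_num
      · rw [smul_comp, smul_smul, comp_assoc, mul_comp, C_comp, X_comp, ← mul_assoc,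
          ← C_mul]
        norm_num
        rw [div_mul_div_comm, mul_comm ((Real.sqrt 2 : ℝ) : ℂ) mu, div_self (mul_ne_zero hmu0 hs0), one_smul]
  · -- LeL / LeR
    intro m i f
    simp only [LeL, LeR, phi0]
    split_ifs with h1 h2 <;>
    · apply Polynomial.funext; intro x
      simp only [eval_smul, eval_mul, eval_add, eval_sub, eval_comp, eval_C, eval_X,
        eval_zero, smul_eq_mul, div_eq_mul_inv]
      push_cast
      rw [h2m]
      ring_nf
      try rw [show ((Real.sqrt 2 : ℝ) : ℂ)⁻¹ ^ 2 = (2:ℂ)⁻¹ by rw [sq, hsinv]]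
      try ring
  · -- LoL / LoR
    intro m i g
    simp only [LoL, LoR, phi0, phi1]
    split_ifs with h1 h2 <;>
    · apply Polynomial.funext; intro x
      simp only [eval_smul, eval_mul, eval_add, eval_sub, eval_comp, eval_C, eval_X,
        eval_zero, smul_eq_mul, div_eq_mul_inv]
      push_cast
      rw [h2m]
      ring_nf
      try rw [show ((Real.sqrt 2 : ℝ) : ℂ)⁻¹ ^ 2 = (2:ℂ)⁻¹ by rw [sq, hsinv]]
      try ring
  · -- GeoL / GeoR
    intro k j f
    simp only [GeoL, GeoR, phi0, phi1]
    split_ifs with h1 <;>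
    · apply Polynomial.funext; intro x
      simp only [eval_smul, eval_mul, eval_add, eval_sub, eval_comp, eval_C, eval_X,
        eval_zero, smul_eq_mul, div_eq_mul_inv]
      push_cast
      rw [h2m1]
      ring_nf
      try rw [show ((Real.sqrt 2 : ℝ) : ℂ)⁻¹ ^ 2 = (2:ℂ)⁻¹ by rw [sq, hsinv]]
      try ring
  · -- GoeL / GoeR
    intro k j g
    simp only [GoeL, GoeR, phi0, phi1]
    split_ifs with h1 h2 <;>
    · apply Polynomial.funext; intro x
      simp only [eval_smul, eval_mul, eval_add, eval_sub, eval_comp, eval_C, eval_X,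
        eval_zero, smul_eq_mul, div_eq_mul_inv]
      push_cast
      rw [h2m1, zpow_add₀ (pow_ne_zero 2 hmu0) k 1, zpow_one]
      ring_nf
      try rw [show ((Real.sqrt 2 : ℝ) : ℂ)⁻¹ ^ 2 = (2:ℂ)⁻¹ by rw [sq, hsinv]]
      try ring
end

section
/- Let q, λ, μ ∈ ℂ*, a, c ∈ ℂ, e ∈ ℂ*, and suppose f, h ∈ ℂ[t] satisfy f(t - q/2)·h(t) = qλ(t - qa) and h(t - q/2)·f(t) = qμ(t - qc) as polynomial identities. Then λ = μ, and either (c = a + 1/2, f is a nonzero constant e, and h(t) = (qλ/e)(t - qa)) or (c = a - 1/2, h is a nonzero constant e, and f(t) = (qλ/e)(t - qa + q/2)). -/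
open Polynomial

lemma fh_aux (k1 k2 b1 b2 : ℂ)
    (heq : C k1 * (X - C b1) = C k2 * (X - C b2)) : k1 = k2 ∧ k1 * b1 = k2 * b2 := by
  have h1 := congrArg (fun p => coeff p 1) heq
  have h0 := congrArg (fun p => coeff p 0) heq
  simp [coeff_sub, coeff_C_mul] at h1 h0
  exact ⟨h1, by rw [h0]⟩

/-- If `f, h ∈ ℂ[t]` satisfy `f(t - q/2)h(t) = qλ(t - qa)` and
`h(t - q/2)f(t) = qμ(t - qc)`, then `λ = μ` and there exists `e ∈ ℂ*` such that either
`c = a + 1/2`, `f = e` and `h(t) = (qλ/e)(t - qa)`, or `c = a - 1/2`, `h = e` and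
`f(t) = (qλ/e)(t - qa + q/2)`. -/
theorem fh_factorization (q lam mu a c : ℂ) (hq : q ≠ 0) (hlam : lam ≠ 0) (hmu : mu ≠ 0)
    (f h : Polynomial ℂ)
    (h1 : f.comp (X - C (q / 2)) * h = C (q * lam) * (X - C (q * a)))
    (h2 : h.comp (X - C (q / 2)) * f = C (q * mu) * (X - C (q * c))) :
    lam = mu ∧ ∃ e : ℂ, e ≠ 0 ∧
      ((c = a + 1 / 2 ∧ f = C e ∧ h = C (q * lam / e) * (X - C (q * a))) ∨
       (c = a - 1 / 2 ∧ h = C e ∧ f = C (q * lam / e) * (X - C (q * a - q / 2)))) := by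
  have hql : q * lam ≠ 0 := mul_ne_zero hq hlam
  have hqm : q * mu ≠ 0 := mul_ne_zero hq hmu
  have hrhs : C (q * lam) * (X - C (q * a)) ≠ 0 :=
    mul_ne_zero (by simpa using hql) (X_sub_C_ne_zero _)
  have hfc : f.comp (X - C (q / 2)) ≠ 0 := fun hz => hrhs (by rw [← h1, hz, zero_mul])
  have hh0 : h ≠ 0 := fun hz => hrhs (by rw [← h1, hz, mul_zero])
  have hf0 : f ≠ 0 := fun hz => hfc (by rw [hz, zero_comp])
  have hdeg : f.natDegree + h.natDegree = 1 := by
    have hd := congrArg natDegree h1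
    rw [natDegree_mul hfc hh0, natDegree_mul (by simpa using hql) (X_sub_C_ne_zero _),
      natDegree_comp] at hd
    simpa only [natDegree_X_sub_C, natDegree_C, mul_one, zero_add] using hd
  rcases Nat.eq_zero_or_pos f.natDegree with hfd | hfd
  · -- f constant
    set e := f.coeff 0 with he
    have hfe : f = C e := eq_C_of_natDegree_eq_zero hfd
    have he0 : e ≠ 0 := fun hz => hf0 (by rw [hfe, hz, map_zero])
    have hCe : C e * h = C (q * lam) * (X - C (q * a)) := by rw [← h1, hfe, C_comp]
    have hh : h = C (q * lam / e) * (X - C (q * a)) := by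
      have h3 : C e⁻¹ * (C e * h) = C e⁻¹ * (C (q * lam) * (X - C (q * a))) := by rw [hCe]
      rw [← mul_assoc, ← map_mul, inv_mul_cancel₀ he0, map_one, one_mul, ← mul_assoc,
        ← map_mul] at h3
      rw [h3]
      congr 2
      field_simp
    have hc : C (q * lam / e) * C e = C (q * lam) := by
      rw [← map_mul, div_mul_cancel₀ _ he0]
    have key : C (q * lam) * (X - C (q * a + q / 2)) = C (q * mu) * (X - C (q * c)) := by
      have h2' := h2
      rw [hh, hfe, mul_comp, sub_comp, X_comp, C_comp, C_comp] at h2'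
      rw [← h2']
      have hc2 : C (q * a + q / 2) = C (q * a) + C (q / 2) := map_add _ _ _
      linear_combination (C (q / 2) + C (q * a) - X) * hc - C (q * lam) * hc2
    obtain ⟨k, b⟩ := fh_aux _ _ _ _ key
    have hlm : lam = mu := mul_left_cancel₀ hq k
    refine ⟨hlm, e, he0, Or.inl ⟨?_, hfe, hh⟩⟩
    rw [← hlm] at b
    have hb : q * a + q / 2 = q * c := mul_left_cancel₀ hql b
    have h5 : q * (c - (a + 1 / 2)) = 0 := by linear_combination -hb
    exact sub_eq_zero.mp ((mul_eq_zero.mp h5).resolve_left hq)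
  · -- h constant
    have hhd : h.natDegree = 0 := by omega
    set e := h.coeff 0 with he
    have hhe : h = C e := eq_C_of_natDegree_eq_zero hhd
    have he0 : e ≠ 0 := fun hz => hh0 (by rw [hhe, hz, map_zero])
    have hCe : f.comp (X - C (q / 2)) * C e = C (q * lam) * (X - C (q * a)) := by
      rw [← h1, hhe]
    have hfcomp : f.comp (X - C (q / 2)) = C (q * lam / e) * (X - C (q * a)) := by
      have h3 : f.comp (X - C (q / 2)) * C e * C e⁻¹
          = C (q * lam) * (X - C (q * a)) * C e⁻¹ := by rw [hCe]
      rw [mul_assoc, ← map_mul, mul_inv_cancel₀ he0, map_one, mul_one] at h3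
      rw [h3]
      rw [mul_comm _ (C e⁻¹), ← mul_assoc, ← map_mul]
      congr 2
      field_simp
    have hf : f = C (q * lam / e) * (X - C (q * a - q / 2)) := by
      have h3 := congrArg (fun p => p.comp (X + C (q / 2))) hfcomp
      simp only [comp_assoc, sub_comp, X_comp, C_comp, add_comp, mul_comp] at h3
      rw [add_sub_cancel_right, comp_X] at h3
      rw [h3]
      have hc2 : C (q * a - q / 2) = C (q * a) - C (q / 2) := map_sub _ _ _
      linear_combination C (q * lam / e) * hc2
    have hc : C (q * lam / e) * C e = C (q * lam) := by
      rw [← map_mul, div_mul_cancel₀ _ he0]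
    have key : C (q * lam) * (X - C (q * a - q / 2)) = C (q * mu) * (X - C (q * c)) := by
      rw [← h2, hhe, hf, C_comp]
      linear_combination -(X - C (q * a - q / 2)) * hc
    obtain ⟨k, b⟩ := fh_aux _ _ _ _ key
    have hlm : lam = mu := mul_left_cancel₀ hq k
    refine ⟨hlm, e, he0, Or.inr ⟨?_, hhe, hf⟩⟩
    rw [← hlm] at b
    have hb : q * a - q / 2 = q * c := mul_left_cancel₀ hql b
    have h5 : q * (c - (a - 1 / 2)) = 0 := by linear_combination -hb
    exact sub_eq_zero.mp ((mul_eq_zero.mp h5).resolve_left hq)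
end

section
/- If a = 0 and b = 0, then the even part ℂ[t²] of the Ramond-Block module Ω_R(λ, a, b), viewed as a module over the subalgebra spanned by {L_{m,0}} (isomorphic to the Witt algebra action L_m f(u) = λ^m u f(u - mq) after rescaling), has the proper nonzero submodule u·ℂ[u]; hence Ω_R(λ, 0, 0) has a proper nonzero graded submodule, and in particular is not simple. -/
open Polynomial

/-- For `a = b = 0`, `Ω_R(λ, 0, 0)` is not simple: the even part `ℂ[t²]` (as a module
over the span of the `L_{m,0}`) has the proper nonzero submodule `u·ℂ[u]` of polynomials
with zero constant term, and consequently `Ω_R(λ, 0, 0)` (realized as pairs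
`(f, g) ↔ f(t²) + t g(t²)`) has a proper nonzero graded submodule. -/
theorem OmegaR_a0_b0_not_simple (q lam : ℂ) (hq : q ≠ 0) (hlam : lam ≠ 0) :
    (∀ (m : ℤ) (f : Polynomial ℂ), f.coeff 0 = 0 → (LeR q lam 0 0 m 0 f).coeff 0 = 0) ∧
    ∃ N : Submodule ℂ (Polynomial ℂ × Polynomial ℂ),
      N ≠ ⊥ ∧ N ≠ ⊤ ∧
      (∀ v ∈ N, ((v.1, 0) : Polynomial ℂ × Polynomial ℂ) ∈ N ∧
        ((0, v.2) : Polynomial ℂ × Polynomial ℂ) ∈ N) ∧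
      (∀ (m : ℤ) (i : ℕ), ∀ v ∈ N,
        ((LeR q lam 0 0 m i v.1, LoR q lam 0 0 m i v.2) : Polynomial ℂ × Polynomial ℂ) ∈ N ∧
        ((GoeR q lam 0 0 m i v.2, GeoR q lam m i v.1) : Polynomial ℂ × Polynomial ℂ) ∈ N) := by
  have hLe : ∀ (m : ℤ) (i : ℕ) (f : Polynomial ℂ), (LeR q lam 0 0 m i f).coeff 0 = 0 := by
    intro m i f
    simp only [LeR, mul_zero, map_zero, sub_zero, add_zero, coeff_smul]
    rcases eq_or_ne i 0 with h | h
    · simp [h, coeff_X_mul]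
    · simp [h]
  have hGoe : ∀ (m : ℤ) (i : ℕ) (g : Polynomial ℂ), (GoeR q lam 0 0 m i g).coeff 0 = 0 := by
    intro m i g
    simp only [GoeR, mul_zero, map_zero, sub_zero, add_zero, coeff_smul]
    rcases eq_or_ne i 0 with h | h
    · simp [h, coeff_X_mul]
    · simp [h]
  refine ⟨fun m f _ => hLe m 0 f, LinearMap.ker ((Polynomial.lcoeff ℂ 0).comp (LinearMap.fst ℂ _ _)), ?_, ?_, ?_, ?_⟩
  · intro h
    have : ((0 : Polynomial ℂ), (1 : Polynomial ℂ)) ∈ LinearMap.ker ((Polynomial.lcoeff ℂ 0).comp (LinearMap.fst ℂ (Polynomial ℂ) (Polynomial ℂ))) := by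
      simp [LinearMap.mem_ker]
    rw [h] at this
    simp at this
  · intro h
    have : ((1 : Polynomial ℂ), (0 : Polynomial ℂ)) ∈ LinearMap.ker ((Polynomial.lcoeff ℂ 0).comp (LinearMap.fst ℂ (Polynomial ℂ) (Polynomial ℂ))) := h ▸ Submodule.mem_top
    simp [LinearMap.mem_ker] at this
  · intro v hv
    simp only [LinearMap.mem_ker, LinearMap.comp_apply, LinearMap.fst_apply, lcoeff_apply] at hv ⊢
    exact ⟨hv, rfl⟩
  · intro m i v hv
    simp only [LinearMap.mem_ker, LinearMap.comp_apply, LinearMap.fst_apply, lcoeff_apply]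
    exact ⟨hLe m i v.1, hGoe m i v.2⟩
end

section
/- Let M be a module over the Ramond-Block algebra R that is free of rank 1 over U(η) where η = ℂL_{0,0} ⊕ ℂG_{0,0}, with even generator 1 satisfying L_{0,0}·1 = t²·1 and G_{0,0}·1 = t·1. Then for all m ∈ ℤ and i ∈ ℤ₊, G_{m,i}·1 = λ^m δ_{i,0} t·1, where λ ∈ ℂ* is the scalar determined by the induced Witt/Heisenberg-Virasoro module structure on the even part. In particular G_{m,i}·1 = 0 for all i ≥ 1. -/
open Polynomial


lemma poly_aux (q lam a b : ℂ) (hq : q ≠ 0) (hlam : lam ≠ 0) (m : ℤ) (i : ℕ)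
    (g : Polynomial ℂ)
    (hid : C ((2*q)*lam^m) *
        (((if i = 0 then X - C ((m:ℂ)*q*a) else 0) + (if q = -1 ∧ i = 1 then C b else 0)) *
          g.comp (X - C ((m:ℂ)*q)))
      - C q * (X * (g.comp (X - C ((m:ℂ)*q)) * g))
      + (C ((2*q)*lam^m) *
        (((if i = 0 then X - C ((m:ℂ)*q*a) else 0) + (if q = -1 ∧ i = 1 then C b else 0)) *
          g.comp (X - C ((m:ℂ)*q)))
      - C q * (X * (g.comp (X - C ((m:ℂ)*q)) * g)))
      = C ((2*q)*lam^(m+m)) *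
        (((if i + i = 0 then X - C (((m+m : ℤ):ℂ)*q*a) else 0) +
          (if q = -1 ∧ i + i = 1 then C b else 0))) ) :
    g = if i = 0 then C (lam ^ m) else 0 := by
  classical
  set s : Polynomial ℂ := X - C ((m:ℂ)*q) with hs
  set gc : Polynomial ℂ := g.comp s with hgc
  have hg0 : g = 0 ↔ gc = 0 := by
    constructor
    · intro h; rw [hgc, h, zero_comp]
    · intro h
      have : gc.comp (X + C ((m:ℂ)*q)) = g := by
        rw [hgc, comp_assoc, hs]
        simp [sub_comp]
      rw [← this, h, zero_comp]
  have hdeg : gc.natDegree = g.natDegree := by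
    rw [hgc, natDegree_comp, hs, natDegree_X_sub_C, mul_one]
  have hlamm : lam ^ m ≠ 0 := zpow_ne_zero m hlam
  have hlam2 : lam ^ (m+m) = lam ^ m * lam ^ m := zpow_add₀ hlam m m
  have hCq : (C q : Polynomial ℂ) ≠ 0 := C_ne_zero.mpr hq
  by_cases hi : i = 0
  · subst hi
    simp only [if_pos rfl, Nat.add_zero, reduceIte, zero_ne_one, and_false, if_false,
      add_zero, hlam2, map_mul, map_ofNat] at hid
    -- fold the constants back
    have f1 : (C ((m:ℂ)*q*a) : Polynomial ℂ) = C (m:ℂ) * C q * C a := by simp [map_mul]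
    have f2 : (C (((m:ℂ)+(m:ℂ))*q*a) : Polynomial ℂ) = C ((((m+m):ℤ):ℂ)) * C q * C a := by
      push_cast
      simp [map_mul, map_add]
    have hcl : gc * (2 * C (lam^m) * (X - C ((m:ℂ)*q*a)) - X * g)
        = C (lam^m) * C (lam^m) * (X - C (((m:ℂ)+(m:ℂ))*q*a)) := by
      have h2 : (C q : Polynomial ℂ) *
          ((2:Polynomial ℂ) * (gc * (2 * C (lam^m) * (X - C ((m:ℂ)*q*a)) - X * g)
            - C (lam^m) * C (lam^m) * (X - C (((m:ℂ)+(m:ℂ))*q*a)))) = 0 := by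
        rw [f1, f2]
        linear_combination hid
      rcases mul_eq_zero.mp h2 with h | h
      · exact absurd h hCq
      rcases mul_eq_zero.mp h with h | h
      · exact absurd h two_ne_zero
      exact sub_eq_zero.mp h
    have hRne : C (lam^m) * C (lam^m) * (X - C (((m:ℂ)+(m:ℂ))*q*a)) ≠ 0 :=
      mul_ne_zero (mul_ne_zero (C_ne_zero.mpr hlamm) (C_ne_zero.mpr hlamm)) (X_sub_C_ne_zero _)
    have hgne : g ≠ 0 := by
      intro h
      rw [h, hg0.mp h, zero_mul] at hcl
      exact hRne hcl.symm
    have hgcne : gc ≠ 0 := fun h => hgne (hg0.mpr h)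
    have hfacne : (2 * C (lam^m) * (X - C ((m:ℂ)*q*a)) - X * g) ≠ 0 := by
      intro h
      rw [h, mul_zero] at hcl
      exact hRne hcl.symm
    -- degree of g is 0
    have hd0 : g.natDegree = 0 := by
      by_contra hd
      have hd1 : 1 ≤ g.natDegree := Nat.one_le_iff_ne_zero.mpr hd
      have hXg : (X * g).natDegree = 1 + g.natDegree := by
        rw [natDegree_mul X_ne_zero hgne, natDegree_X]
      have hsm : (2 * C (lam^m) * (X - C ((m:ℂ)*q*a))).natDegree = 1 := by
        have : (2 * C (lam^m) : Polynomial ℂ) = C (2*lam^m) := by rw [map_mul, map_ofNat]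
        rw [this, natDegree_C_mul (by simpa using hlamm), natDegree_X_sub_C]
      have hfd : (2 * C (lam^m) * (X - C ((m:ℂ)*q*a)) - X * g).natDegree = 1 + g.natDegree := by
        rw [natDegree_sub_eq_right_of_natDegree_lt]
        · exact hXg
        · rw [hXg, hsm]; omega
      have hcld := congrArg natDegree hcl
      rw [natDegree_mul hgcne hfacne, hfd, hdeg] at hcld
      have hRd : (C (lam^m) * C (lam^m) * (X - C (((m:ℂ)+(m:ℂ))*q*a))).natDegree = 1 := by
        rw [← map_mul, natDegree_C_mul (mul_ne_zero hlamm hlamm), natDegree_X_sub_C]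
      rw [hRd] at hcld
      omega
    obtain ⟨c, hc⟩ := natDegree_eq_zero.mp hd0
    have hcne : c ≠ 0 := by rintro rfl; simp at hc; exact hgne hc.symm
    have hgcc : gc = C c := by rw [hgc, ← hc, C_comp]
    rw [← hc, hgcc] at hcl
    have h1 := congrArg (Polynomial.eval 1) hcl
    have h0 := congrArg (Polynomial.eval 0) hcl
    simp only [eval_mul, eval_sub, eval_add, eval_C, eval_X, eval_ofNat] at h1 h0
    have hsq : (c - lam^m)^2 = 0 := by linear_combination h0 - h1
    have hce : c = lam ^ m :=
      sub_eq_zero.mp (pow_eq_zero_iff (two_ne_zero) |>.mp hsq)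
    rw [if_pos rfl, ← hc, hce]
  · -- i ≠ 0
    have h2 : ¬ (i + i = 0) := by omega
    have h3 : ¬ (q = -1 ∧ i + i = 1) := by rintro ⟨_, h⟩; omega
    simp only [if_neg hi, if_neg h2, if_neg h3, zero_add, add_zero, mul_zero, zero_mul] at hid
    rw [if_neg hi]
    by_contra hgne
    have hgcne : gc ≠ 0 := fun h => hgne (hg0.mpr h)
    have hfac : gc * ((2:Polynomial ℂ) *
        (C ((2*q)*lam^m) * (if q = -1 ∧ i = 1 then C b else 0) - C q * (X * g))) = 0 := by
      linear_combination hid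
    rcases mul_eq_zero.mp hfac with h | h
    · exact hgcne h
    rcases mul_eq_zero.mp h with h | h
    · exact absurd h two_ne_zero
    have heq : C q * (X * g) = C ((2*q)*lam^m) * (if q = -1 ∧ i = 1 then C b else 0) :=
      (sub_eq_zero.mp h).symm
    by_cases hw : q = -1 ∧ i = 1
    · rw [if_pos hw, ← map_mul] at heq
      have hdg := congrArg natDegree heq
      rw [natDegree_C_mul hq, natDegree_mul X_ne_zero hgne, natDegree_X, natDegree_C] at hdg
      omega
    · rw [if_neg hw, mul_zero] at heq
      rcases mul_eq_zero.mp heq with h' | h'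
      · exact hCq h'
      rcases mul_eq_zero.mp h' with h' | h'
      · exact X_ne_zero h'
      · exact hgne h'



/-- Let `M` be a module over the Ramond-Block algebra `R = S(q)` (given by operators
`ρL, ρG` satisfying the bracket relations of Definition 1.1), graded by a pair of
complementary submodules `M₀, M₁` preserved (resp. swapped) by the even (resp. odd)
operators, which is free of rank 1 over `U(η)`, `η = ℂL_{0,0} ⊕ ℂG_{0,0}`, with even
generator `1 ∈ M₀`: every element is uniquely `f(L_{0,0})·1 + G_{0,0} g(L_{0,0})·1`.
Assume the even part carries the action of Lemma 3.3,
`L_{m,i} f(t²)·1 = λ^m(δ_{i,0}(t² - mqa) + δ_{q,-1}δ_{i,1}b) f(t² - mq)·1`.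
Then `G_{m,i}·1 = λ^m δ_{i,0} t·1` (where `t·1 = G_{0,0}·1`); in particular
`G_{m,i}·1 = 0` for `i ≥ 1`. -/
theorem G_action_on_generator (q lam a b : ℂ) (hq : q ≠ 0) (hlam : lam ≠ 0)
    (M : Type*) [AddCommGroup M] [Module ℂ M]
    (ρL ρG : ℤ → ℕ → Module.End ℂ M)
    (hLL : ∀ (m n : ℤ) (i j : ℕ), ρL m i * ρL n j - ρL n j * ρL m i =
      ((n : ℂ) * ((i : ℂ) + q) - (m : ℂ) * ((j : ℂ) + q)) • ρL (m + n) (i + j))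
    (hLG : ∀ (m l : ℤ) (i j : ℕ), ρL m i * ρG l j - ρG l j * ρL m i =
      ((l : ℂ) * ((i : ℂ) + q) - (m : ℂ) * ((j : ℂ) + q / 2)) • ρG (m + l) (i + j))
    (hGG : ∀ (l r : ℤ) (i j : ℕ), ρG l i * ρG r j + ρG r j * ρG l i =
      (2 * q) • ρL (l + r) (i + j))
    (M0 M1 : Submodule ℂ M) (hcompl : IsCompl M0 M1)
    (hL0 : ∀ (m : ℤ) (i : ℕ), ∀ x ∈ M0, ρL m i x ∈ M0)
    (hL1 : ∀ (m : ℤ) (i : ℕ), ∀ x ∈ M1, ρL m i x ∈ M1)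
    (hG0 : ∀ (m : ℤ) (i : ℕ), ∀ x ∈ M0, ρG m i x ∈ M1)
    (hG1 : ∀ (m : ℤ) (i : ℕ), ∀ x ∈ M1, ρG m i x ∈ M0)
    (one : M) (hone : one ∈ M0)
    (hfree : Function.Bijective (fun fg : Polynomial ℂ × Polynomial ℂ =>
      (Polynomial.aeval (ρL 0 0) fg.1) one + ρG 0 0 ((Polynomial.aeval (ρL 0 0) fg.2) one)))
    (heven : ∀ (m : ℤ) (i : ℕ) (f : Polynomial ℂ),
      ρL m i ((Polynomial.aeval (ρL 0 0) f) one) =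
        lam ^ m • (Polynomial.aeval (ρL 0 0)
          (((if i = 0 then Polynomial.X - Polynomial.C ((m : ℂ) * q * a) else 0) +
            (if q = -1 ∧ i = 1 then Polynomial.C b else 0)) *
           f.comp (Polynomial.X - Polynomial.C ((m : ℂ) * q)))) one)
    (m : ℤ) (i : ℕ) :
    ρG m i one = lam ^ m • (if i = 0 then ρG 0 0 one else 0) := by
  classical
  have eadd : ∀ p r : Polynomial ℂ, (aeval (ρL 0 0) (p + r)) one
      = (aeval (ρL 0 0) p) one + (aeval (ρL 0 0) r) one := by
    intro p r; rw [map_add]; rfl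
  have esub : ∀ p r : Polynomial ℂ, (aeval (ρL 0 0) (p - r)) one
      = (aeval (ρL 0 0) p) one - (aeval (ρL 0 0) r) one := by
    intro p r; rw [map_sub]; rfl
  have eCmul : ∀ (c : ℂ) (p : Polynomial ℂ), (aeval (ρL 0 0) (C c * p)) one
      = c • (aeval (ρL 0 0) p) one := by
    intro c p
    rw [map_mul, aeval_C]
    simp [Module.End.mul_apply, Module.algebraMap_end_apply]
  have eX : ∀ p : Polynomial ℂ, (aeval (ρL 0 0) (X * p)) one
      = ρL 0 0 ((aeval (ρL 0 0) p) one) := by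
    intro p; rw [map_mul, aeval_X]; rfl
  have eC : ∀ c : ℂ, (aeval (ρL 0 0) (C c : Polynomial ℂ)) one = c • one := by
    intro c
    rw [aeval_C]
    simp [Module.algebraMap_end_apply]
  have einj : ∀ p r : Polynomial ℂ,
      (aeval (ρL 0 0) p) one = (aeval (ρL 0 0) r) one → p = r := by
    intro p r h
    have h2 := hfree.1 (a₁ := (p, 0)) (a₂ := (r, 0)) (by simpa using h)
    exact (Prod.ext_iff.mp h2).1
  have emem : ∀ p : Polynomial ℂ, (aeval (ρL 0 0) p) one ∈ M0 := by
    intro p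
    induction p using Polynomial.induction_on with
    | C c => rw [eC]; exact M0.smul_mem c hone
    | add p r hp hr => rw [eadd]; exact M0.add_mem hp hr
    | monomial n c hn =>
      have h1 : (C c * X ^ (n+1) : Polynomial ℂ) = X * (C c * X ^ n) := by ring
      rw [h1, eX]; exact hL0 0 0 _ hn
  -- operator identities
  have commLG0 : ∀ x : M, ρL 0 0 (ρG 0 0 x) = ρG 0 0 (ρL 0 0 x) := by
    intro x
    have h := congrArg (fun T : Module.End ℂ M => T x) (hLG 0 0 0 0)
    simp only [LinearMap.sub_apply, Module.End.mul_apply, LinearMap.smul_apply,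
      Int.cast_zero, Nat.cast_zero, zero_mul, sub_zero, sub_self, zero_smul, zero_add] at h
    exact sub_eq_zero.mp h
  have G0sq : ∀ x : M, ρG 0 0 (ρG 0 0 x) = q • ρL 0 0 x := by
    intro x
    have h := congrArg (fun T : Module.End ℂ M => T x) (hGG 0 0 0 0)
    simp only [LinearMap.add_apply, Module.End.mul_apply, LinearMap.smul_apply, add_zero] at h
    have h2 : (2:ℂ) • (ρG 0 0 (ρG 0 0 x)) = (2:ℂ) • (q • ρL 0 0 x) := by
      rw [two_smul, h, smul_smul]
    have h3 := congrArg (fun y => (2⁻¹:ℂ) • y) h2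
    simpa [smul_smul] using h3
  have Gcomm : ∀ x : M, ρG m i (ρL 0 0 x) = ρL 0 0 (ρG m i x) - ((m:ℂ) * q) • ρG m i x := by
    intro x
    have h := congrArg (fun T : Module.End ℂ M => T x) (hLG 0 m 0 i)
    simp only [LinearMap.sub_apply, Module.End.mul_apply, LinearMap.smul_apply,
      Int.cast_zero, Nat.cast_zero, zero_mul, zero_add, sub_zero, zero_sub, neg_mul,
      zero_smul] at h
    have h2 : ρG m i (ρL 0 0 x) + ((m:ℂ) * q) • ρG m i x = ρL 0 0 (ρG m i x) := by
      rw [← h]; abel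
    exact eq_sub_of_add_eq h2
  have Ganti : ∀ x : M, ρG m i (ρG 0 0 x) = (2 * q) • ρL m i x - ρG 0 0 (ρG m i x) := by
    intro x
    have h := congrArg (fun T : Module.End ℂ M => T x) (hGG m 0 i 0)
    simp only [LinearMap.add_apply, Module.End.mul_apply, LinearMap.smul_apply,
      add_zero] at h
    exact eq_sub_of_add_eq h
  -- decomposition of ρG m i one
  obtain ⟨⟨f, g⟩, hfg⟩ := hfree.2 (ρG m i one)
  simp only at hfg
  have hf0 : (aeval (ρL 0 0) f) one = 0 := by
    have h1 : (aeval (ρL 0 0) f) one ∈ M1 := by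
      have h2 : (aeval (ρL 0 0) f) one
          = ρG m i one - ρG 0 0 ((aeval (ρL 0 0) g) one) := by
        rw [← hfg]; abel
      rw [h2]
      exact M1.sub_mem (hG0 m i one hone) (hG0 0 0 _ (emem g))
    exact Submodule.disjoint_def.mp hcompl.disjoint _ (emem f) h1
  have hg : ρG m i one = ρG 0 0 ((aeval (ρL 0 0) g) one) := by
    rw [← hfg, hf0, zero_add]
  -- push lemma
  have push : ∀ p : Polynomial ℂ, ρG m i ((aeval (ρL 0 0) p) one)
      = ρG 0 0 ((aeval (ρL 0 0) (p.comp (X - C ((m:ℂ)*q)) * g)) one) := by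
    intro p
    induction p using Polynomial.induction_on with
    | C c =>
      rw [eC, map_smul, hg, C_comp, eCmul, map_smul]
    | add p r hp hr =>
      rw [eadd, map_add, hp, hr, add_comp, add_mul, eadd, map_add]
    | monomial n c hn =>
      have h1 : (C c * X ^ (n+1) : Polynomial ℂ) = X * (C c * X ^ n) := by ring
      have h2 : ((X * (C c * X ^ n)).comp (X - C ((m:ℂ)*q)) * g : Polynomial ℂ)
          = X * ((C c * X ^ n).comp (X - C ((m:ℂ)*q)) * g)
            - C ((m:ℂ)*q) * ((C c * X ^ n).comp (X - C ((m:ℂ)*q)) * g) := by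
        rw [mul_comp, X_comp]; ring
      rw [h1, eX, Gcomm, hn, commLG0, h2, esub, eX, eCmul, ← map_smul, ← map_sub]
  -- main computation
  have key := congrArg (fun T : Module.End ℂ M => T one) (hGG m m i i)
  simp only [LinearMap.add_apply, Module.End.mul_apply, LinearMap.smul_apply] at key
  rw [hg, Ganti, push, G0sq, heven m i g] at key
  have honeL : ρL (m+m) (i+i) one
      = lam ^ (m+m) • (aeval (ρL 0 0)
          (((if i + i = 0 then X - C (((m+m : ℤ):ℂ)*q*a) else 0) +
            (if q = -1 ∧ i + i = 1 then C b else 0)))) one := by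
    have h := heven (m+m) (i+i) 1
    simpa [one_comp] using h
  rw [honeL, ← eX] at key
  set P : Polynomial ℂ := (if i = 0 then X - C ((m:ℂ)*q*a) else 0) +
    (if q = -1 ∧ i = 1 then C b else 0) with hP
  set P' : Polynomial ℂ := (if i + i = 0 then X - C (((m+m : ℤ):ℂ)*q*a) else 0) +
    (if q = -1 ∧ i + i = 1 then C b else 0) with hP'
  set A1 : Polynomial ℂ := P * g.comp (X - C ((m:ℂ)*q)) with hA1
  set A2 : Polynomial ℂ := X * (g.comp (X - C ((m:ℂ)*q)) * g) with hA2
  have t1 : (2*q) • lam^m • (aeval (ρL 0 0) A1) one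
      = (aeval (ρL 0 0) (C ((2*q)*lam^m) * A1)) one := by rw [eCmul, smul_smul]
  have t2 : q • (aeval (ρL 0 0) A2) one = (aeval (ρL 0 0) (C q * A2)) one :=
    (eCmul _ _).symm
  have t3 : (2*q) • lam^(m+m) • (aeval (ρL 0 0) P') one
      = (aeval (ρL 0 0) (C ((2*q)*lam^(m+m)) * P')) one := by rw [eCmul, smul_smul]
  rw [t1, t2, t3] at key
  have keyP : C ((2*q)*lam^m) * A1 - C q * A2 + (C ((2*q)*lam^m) * A1 - C q * A2)
      = C ((2*q)*lam^(m+m)) * P' := by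
    apply einj
    rw [eadd, esub]
    exact key
  have hgval := poly_aux q lam a b hq hlam m i g keyP
  rw [hg]
  by_cases hi : i = 0
  · rw [if_pos hi] at hgval ⊢
    rw [hgval, eC, map_smul]
  · rw [if_neg hi] at hgval ⊢
    rw [hgval]
    simp
end
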